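/- arXiv:1909.04203 — 2 statements merged into one kernel-verified Lean document; each statement's English description precedes it below -/
import Mathlib

section
/- Let t_c > 0 be fixed. Define D(L_a, L_b | t_c) = inf over P with P^T P = I of ||P e^{t_c L_a} − e^{t_c L_b} P||_F for real symmetric matrices L_a, L_b. Then D(L₁, L₃ | t_c) ≤ D(L₁, L₂ | t_c) + D(L₂, L₃ | t_c). -/
open Matrix NormedSpace

/-- Frobenius norm of a real matrix. -/
noncomputable def frob {a b : ℕ} (A : Matrix (Fin a) (Fin b) ℝ) : ℝ :=
  Real.sqrt (Matrix.trace (Aᵀ * A))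

/-- The α = 1 exponential graph diffusion distance at fixed time `t`. -/
noncomputable def expDist (t : ℝ) {a b : ℕ} (La : Matrix (Fin a) (Fin a) ℝ)
    (Lb : Matrix (Fin b) (Fin b) ℝ) : ℝ :=
  sInf {x : ℝ | ∃ P : Matrix (Fin b) (Fin a) ℝ, Pᵀ * P = 1 ∧
    x = frob (P * exp (t • La) - exp (t • Lb) * P)}

/-! If the isometry `P` almost intertwines `A` with `B` and `Q` almost intertwines `B` with `C`,
then `Q * P` almost intertwines `A` with `C`: `QPA - CQP = Q (PA - BP) + (QB - CQ) P`, where left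
multiplication by `Q` preserves the Frobenius norm and right multiplication by `P` does not increase
it. Taking infima needs the sets of defects to be nonempty (an empty `sInf` is `0` in `ℝ`); for
`a ≤ b` the coordinate inclusion `Fin a ↪ Fin b` provides an isometry. -/

theorem le_csInf_add_csInf {α : Type*} [ConditionallyCompleteLattice α] [AddGroup α]
    [AddLeftMono α] [AddRightMono α] {a : α} {s t : Set α} (hs : s.Nonempty) (ht : t.Nonempty)
    (h : ∀ x ∈ s, ∀ y ∈ t, a ≤ x + y) : a ≤ sInf s + sInf t := by
  have := hs.to_subtype
  have := ht.to_subtype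
  simpa only [sInf_eq_iInf'] using le_ciInf_add_ciInf fun (x : s) (y : t) ↦ h x x.2 y y.2

namespace Matrix

variable {l m n α : Type*}

theorem transpose_mul_self_mul_eq_one [Fintype l] [Fintype m] [DecidableEq m] [DecidableEq n]
    [CommSemiring α] {Q : Matrix l m α} {P : Matrix m n α} (hQ : Qᵀ * Q = 1) (hP : Pᵀ * P = 1) :
    (Q * P)ᵀ * (Q * P) = 1 := by
  rw [transpose_mul, Matrix.mul_assoc, ← Matrix.mul_assoc Qᵀ, hQ, Matrix.one_mul, hP]

theorem transpose_mul_self_submatrix_one [Fintype m] [DecidableEq m] [DecidableEq n]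
    [NonAssocSemiring α] (e : n ↪ m) :
    ((1 : Matrix m m α).submatrix id e)ᵀ * (1 : Matrix m m α).submatrix id e = 1 := by
  rw [transpose_submatrix, transpose_one, ← submatrix_mul _ _ _ _ _ Function.bijective_id,
    Matrix.one_mul, submatrix_one _ e.injective]

section FrobeniusNorm

attribute [local instance] frobeniusNormedAddCommGroup

variable [Fintype l] [Fintype m] [Fintype n]

theorem frobenius_norm_sq_eq_trace (A : Matrix m n ℝ) : ‖A‖ ^ 2 = (Aᵀ * A).trace := by
  rw [frobenius_norm_def, ← Real.sqrt_eq_rpow, Real.sq_sqrt (by positivity), trace,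
    Finset.sum_comm]
  simp [mul_apply, sq]

theorem frobenius_norm_isometry_mul [DecidableEq m] {Q : Matrix l m ℝ} (hQ : Qᵀ * Q = 1)
    (A : Matrix m n ℝ) : ‖Q * A‖ = ‖A‖ := by
  rw [← sq_eq_sq₀ (norm_nonneg _) (norm_nonneg _), frobenius_norm_sq_eq_trace,
    frobenius_norm_sq_eq_trace, transpose_mul, Matrix.mul_assoc, ← Matrix.mul_assoc Qᵀ, hQ,
    Matrix.one_mul]

theorem frobenius_norm_mul_isometry_le [DecidableEq m] [DecidableEq n] {P : Matrix m n ℝ}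
    (hP : Pᵀ * P = 1) (A : Matrix l m ℝ) : ‖A * P‖ ≤ ‖A‖ := by
  set R := 1 - P * Pᵀ
  have hR : Rᵀ = R := by simp [R]
  have hRR : R * R = R := by
    simp only [R, sub_mul, mul_sub, Matrix.one_mul, Matrix.mul_one, Matrix.mul_assoc P,
      ← Matrix.mul_assoc Pᵀ P, hP]
    abel
  -- `P Pᵀ` and `R` are complementary orthogonal projections, so `A` splits orthogonally
  have pythagoras : ‖A‖ ^ 2 = ‖A * P‖ ^ 2 + ‖A * R‖ ^ 2 := by
    simp only [frobenius_norm_sq_eq_trace, transpose_mul, hR, Matrix.mul_assoc]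
    rw [trace_mul_comm R, Matrix.mul_assoc, Matrix.mul_assoc, hRR, trace_mul_comm Pᵀ,
      Matrix.mul_assoc, Matrix.mul_assoc]
    simp only [R, Matrix.mul_sub, Matrix.mul_one, trace_sub]
    ring
  nlinarith [norm_nonneg (A * P), norm_nonneg A]

theorem frobenius_norm_intertwining_mul_le [DecidableEq m] [DecidableEq n]
    {A : Matrix n n ℝ} {B : Matrix m m ℝ} {C : Matrix l l ℝ} {P : Matrix m n ℝ}
    {Q : Matrix l m ℝ} (hP : Pᵀ * P = 1) (hQ : Qᵀ * Q = 1) :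
    ‖Q * P * A - C * (Q * P)‖ ≤ ‖P * A - B * P‖ + ‖Q * B - C * Q‖ := calc
  ‖Q * P * A - C * (Q * P)‖ = ‖Q * (P * A - B * P) + (Q * B - C * Q) * P‖ := by
    congr 1
    simp only [Matrix.mul_sub, Matrix.sub_mul, Matrix.mul_assoc]
    abel
  _ ≤ ‖Q * (P * A - B * P)‖ + ‖(Q * B - C * Q) * P‖ := norm_add_le _ _
  _ ≤ ‖P * A - B * P‖ + ‖Q * B - C * Q‖ := by
    rw [frobenius_norm_isometry_mul hQ]
    gcongr
    exact frobenius_norm_mul_isometry_le hP _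

end FrobeniusNorm

end Matrix

section IntertwiningDist

attribute [local instance] Matrix.frobeniusNormedAddCommGroup

noncomputable def intertwiningDist {a b : ℕ} (A : Matrix (Fin a) (Fin a) ℝ)
    (B : Matrix (Fin b) (Fin b) ℝ) : ℝ :=
  sInf {x : ℝ | ∃ P : Matrix (Fin b) (Fin a) ℝ, Pᵀ * P = 1 ∧ x = frob (P * A - B * P)}

theorem frob_eq_frobenius_norm {a b : ℕ} (A : Matrix (Fin a) (Fin b) ℝ) : frob A = ‖A‖ := by
  rw [frob, ← Matrix.frobenius_norm_sq_eq_trace, Real.sqrt_sq (norm_nonneg _)]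

theorem intertwiningDist_le {a b : ℕ} {A : Matrix (Fin a) (Fin a) ℝ}
    {B : Matrix (Fin b) (Fin b) ℝ} {P : Matrix (Fin b) (Fin a) ℝ} (hP : Pᵀ * P = 1) :
    intertwiningDist A B ≤ ‖P * A - B * P‖ := by
  rw [← frob_eq_frobenius_norm]
  refine csInf_le ⟨0, ?_⟩ ⟨P, hP, rfl⟩
  rintro _ ⟨Q, -, rfl⟩
  exact Real.sqrt_nonneg _

theorem intertwiningDist_triangle {a b c : ℕ} (hab : a ≤ b) (hbc : b ≤ c)
    (A : Matrix (Fin a) (Fin a) ℝ) (B : Matrix (Fin b) (Fin b) ℝ)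
    (C : Matrix (Fin c) (Fin c) ℝ) :
    intertwiningDist A C ≤ intertwiningDist A B + intertwiningDist B C := by
  refine le_csInf_add_csInf
    ⟨_, _, Matrix.transpose_mul_self_submatrix_one (Fin.castLEEmb hab), rfl⟩
    ⟨_, _, Matrix.transpose_mul_self_submatrix_one (Fin.castLEEmb hbc), rfl⟩ ?_
  rintro _ ⟨P, hP, rfl⟩ _ ⟨Q, hQ, rfl⟩
  rw [frob_eq_frobenius_norm, frob_eq_frobenius_norm]
  exact (intertwiningDist_le (Matrix.transpose_mul_self_mul_eq_one hQ hP)).trans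
    (Matrix.frobenius_norm_intertwining_mul_le hP hQ)

end IntertwiningDist

theorem expDist_triangle_general {n₁ n₂ n₃ : ℕ} (h12 : n₁ ≤ n₂) (h23 : n₂ ≤ n₃)
    (t : ℝ)
    (L₁ : Matrix (Fin n₁) (Fin n₁) ℝ) (L₂ : Matrix (Fin n₂) (Fin n₂) ℝ)
    (L₃ : Matrix (Fin n₃) (Fin n₃) ℝ) :
    expDist t L₁ L₃ ≤ expDist t L₁ L₂ + expDist t L₂ L₃ :=
  intertwiningDist_triangle h12 h23 _ _ _

theorem expDist_triangle {n₁ n₂ n₃ : ℕ} (h12 : n₁ ≤ n₂) (h23 : n₂ ≤ n₃)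
    (t : ℝ) (ht : 0 < t)
    (L₁ : Matrix (Fin n₁) (Fin n₁) ℝ) (L₂ : Matrix (Fin n₂) (Fin n₂) ℝ)
    (L₃ : Matrix (Fin n₃) (Fin n₃) ℝ)
    (h₁ : L₁.IsSymm) (h₂ : L₂.IsSymm) (h₃ : L₃.IsSymm) :
    expDist t L₁ L₃ ≤ expDist t L₁ L₂ + expDist t L₂ L₃ :=
  expDist_triangle_general h12 h23 t L₁ L₂ L₃
end

section
/- Fix a real number r. For graphs G_a with Laplacians L_a of sizes n_a, define D̃_r(G_a, G_b) = inf over P with P^T P = I of (n_a n_b)^{−r} ||(n_a/n_b)^{−r} P L_a − (n_a/n_b)^{r} L_b P||_F (for n_a ≤ n_b). Then for n₁ ≤ n₂ ≤ n₃, D̃_r(G₁, G₃) ≤ D̃_r(G₁, G₂) + D̃_r(G₂, G₃). -/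
/-!
Since `(n_a n_b)^(-r) (n_a/n_b)^(∓r)` equals `n_a^(-2r)` resp. `n_b^(-2r)`, the distance is the
infimum of `‖P M_a - M_b P‖_F` over isometries `P`, where `M_n = n^(-2r) L_n`. For isometries `P`,
`Q` the product `QP` is again an isometry, and
`QP M₁ - M₃ QP = Q (P M₁ - M₂ P) + (Q M₂ - M₃ Q) P`;
multiplying on the left by `Q` preserves the Frobenius norm and multiplying on the right by `P`
does not increase it, so taking infima gives the triangle inequality.
-/

open Matrix

/-- The time-scaled graph diffusion distance with α fixed at `(n_a/n_b)^r`. -/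
noncomputable def tsgdd (r : ℝ) {a b : ℕ} (La : Matrix (Fin a) (Fin a) ℝ)
    (Lb : Matrix (Fin b) (Fin b) ℝ) : ℝ :=
  sInf {x : ℝ | ∃ P : Matrix (Fin b) (Fin a) ℝ, Pᵀ * P = 1 ∧
    x = ((a : ℝ) * b) ^ (-r) *
      frob ((((a : ℝ) / b) ^ (-r)) • (P * La) - (((a : ℝ) / b) ^ r) • (Lb * P))}

variable {a b c : ℕ}

section Frobenius

attribute [local instance] Matrix.frobeniusNormedAddCommGroup Matrix.frobeniusNormedSpace

lemma frob_eq_norm (A : Matrix (Fin a) (Fin b) ℝ) : frob A = ‖A‖ := by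
  rw [frob, frobenius_norm_def, Real.sqrt_eq_rpow, trace, Finset.sum_comm]
  simp [Matrix.mul_apply, sq]

lemma frob_add_le (A B : Matrix (Fin a) (Fin b) ℝ) : frob (A + B) ≤ frob A + frob B := by
  simpa only [frob_eq_norm] using norm_add_le A B

lemma frob_smul (t : ℝ) (A : Matrix (Fin a) (Fin b) ℝ) : frob (t • A) = |t| * frob A := by
  rw [frob_eq_norm, frob_eq_norm, norm_smul, Real.norm_eq_abs]

end Frobenius

lemma frob_sq (A : Matrix (Fin a) (Fin b) ℝ) : frob A ^ 2 = trace (A * Aᵀ) := by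
  rw [frob, Real.sq_sqrt, trace_mul_comm]
  simpa using (posSemidef_conjTranspose_mul_self A).trace_nonneg

lemma frob_nonneg (A : Matrix (Fin a) (Fin b) ℝ) : 0 ≤ frob A := Real.sqrt_nonneg _

lemma frob_isometry_mul {Q : Matrix (Fin c) (Fin b) ℝ} (hQ : Qᵀ * Q = 1)
    (E : Matrix (Fin b) (Fin a) ℝ) : frob (Q * E) = frob E := by
  rw [frob, frob, transpose_mul, Matrix.mul_assoc, ← Matrix.mul_assoc Qᵀ, hQ, Matrix.one_mul]

lemma frob_mul_isometry_le (E : Matrix (Fin c) (Fin b) ℝ) {P : Matrix (Fin b) (Fin a) ℝ}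
    (hP : Pᵀ * P = 1) : frob (E * P) ≤ frob E := by
  -- `K` is the orthogonal projection onto the complement of the range of `P`.
  set K := 1 - P * Pᵀ
  have hK : K * Kᵀ = K := by
    simp only [K, transpose_sub, transpose_one, transpose_mul, transpose_transpose,
      Matrix.sub_mul, Matrix.mul_sub, Matrix.one_mul, Matrix.mul_one, Matrix.mul_assoc]
    rw [← Matrix.mul_assoc Pᵀ, hP, Matrix.one_mul]
    abel
  have : frob E ^ 2 = frob (E * P) ^ 2 + frob (E * K) ^ 2 := by
    rw [frob_sq, frob_sq, frob_sq, transpose_mul, transpose_mul, Matrix.mul_assoc E K,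
      ← Matrix.mul_assoc K, hK]
    simp only [K, Matrix.mul_sub, Matrix.sub_mul, Matrix.one_mul, trace_sub, Matrix.mul_assoc]
    ring
  rw [← pow_le_pow_iff_left₀ (frob_nonneg _) (frob_nonneg _) two_ne_zero, this]
  exact le_add_of_nonneg_right (sq_nonneg _)

lemma frob_comp_sub_le (A : Matrix (Fin a) (Fin a) ℝ) (B : Matrix (Fin b) (Fin b) ℝ)
    (C : Matrix (Fin c) (Fin c) ℝ) {P : Matrix (Fin b) (Fin a) ℝ} {Q : Matrix (Fin c) (Fin b) ℝ}
    (hP : Pᵀ * P = 1) (hQ : Qᵀ * Q = 1) :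
    frob (Q * P * A - C * (Q * P)) ≤ frob (P * A - B * P) + frob (Q * B - C * Q) := by
  have h : Q * P * A - C * (Q * P) = Q * (P * A - B * P) + (Q * B - C * Q) * P := by
    simp only [Matrix.mul_sub, Matrix.sub_mul, Matrix.mul_assoc]
    abel
  calc frob (Q * P * A - C * (Q * P))
      ≤ frob (Q * (P * A - B * P)) + frob ((Q * B - C * Q) * P) := h ▸ frob_add_le _ _
    _ ≤ frob (P * A - B * P) + frob (Q * B - C * Q) := by
      rw [frob_isometry_mul hQ]
      exact add_le_add_right (frob_mul_isometry_le _ hP) _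

lemma exists_transpose_mul_self_eq_one (h : a ≤ b) :
    ∃ P : Matrix (Fin b) (Fin a) ℝ, Pᵀ * P = 1 :=
  ⟨(1 : Matrix (Fin b) (Fin b) ℝ).submatrix id (Fin.castLE h), by
    rw [transpose_submatrix, transpose_one, ← submatrix_mul _ _ _ _ _ Function.bijective_id,
      Matrix.one_mul, submatrix_one _ (Fin.castLE_injective h)]⟩

def isometryCosts (A : Matrix (Fin a) (Fin a) ℝ) (B : Matrix (Fin b) (Fin b) ℝ) : Set ℝ :=
  {x : ℝ | ∃ P : Matrix (Fin b) (Fin a) ℝ, Pᵀ * P = 1 ∧ x = frob (P * A - B * P)}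

noncomputable def isometryDist (A : Matrix (Fin a) (Fin a) ℝ) (B : Matrix (Fin b) (Fin b) ℝ) :
    ℝ :=
  sInf (isometryCosts A B)

lemma isometryCosts_nonempty (h : a ≤ b) (A : Matrix (Fin a) (Fin a) ℝ)
    (B : Matrix (Fin b) (Fin b) ℝ) : (isometryCosts A B).Nonempty :=
  let ⟨P, hP⟩ := exists_transpose_mul_self_eq_one h
  ⟨_, P, hP, rfl⟩

lemma bddBelow_isometryCosts (A : Matrix (Fin a) (Fin a) ℝ) (B : Matrix (Fin b) (Fin b) ℝ) :
    BddBelow (isometryCosts A B) :=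
  ⟨0, by rintro _ ⟨P, -, rfl⟩; exact frob_nonneg _⟩

theorem isometryDist_triangle (hab : a ≤ b) (hbc : b ≤ c) (A : Matrix (Fin a) (Fin a) ℝ)
    (B : Matrix (Fin b) (Fin b) ℝ) (C : Matrix (Fin c) (Fin c) ℝ) :
    isometryDist A C ≤ isometryDist A B + isometryDist B C := by
  rw [isometryDist, isometryDist, isometryDist, ← csInf_add (isometryCosts_nonempty hab A B)
    (bddBelow_isometryCosts A B) (isometryCosts_nonempty hbc B C) (bddBelow_isometryCosts B C)]
  refine le_csInf ((isometryCosts_nonempty hab A B).add (isometryCosts_nonempty hbc B C)) ?_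
  rintro _ ⟨_, ⟨P, hP, rfl⟩, _, ⟨Q, hQ, rfl⟩, rfl⟩
  have hQP : (Q * P)ᵀ * (Q * P) = 1 := by
    rw [transpose_mul, Matrix.mul_assoc, ← Matrix.mul_assoc Qᵀ, hQ, Matrix.one_mul, hP]
  exact (csInf_le (bddBelow_isometryCosts A C) ⟨Q * P, hQP, rfl⟩).trans
    (frob_comp_sub_le A B C hP hQ)

lemma tsgdd_eq_isometryDist (r : ℝ) (ha : 0 < a) (hb : 0 < b) (La : Matrix (Fin a) (Fin a) ℝ)
    (Lb : Matrix (Fin b) (Fin b) ℝ) :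
    tsgdd r La Lb = isometryDist ((a : ℝ) ^ (-2 * r) • La) ((b : ℝ) ^ (-2 * r) • Lb) := by
  have ha' : (0 : ℝ) < a := Nat.cast_pos.mpr ha
  have hb' : (0 : ℝ) < b := Nat.cast_pos.mpr hb
  have h₁ : ((a : ℝ) * b) ^ (-r) * ((a : ℝ) / b) ^ (-r) = (a : ℝ) ^ (-2 * r) := by
    rw [Real.mul_rpow ha'.le hb'.le, Real.div_rpow ha'.le hb'.le, show -2 * r = -r + -r by ring,
      Real.rpow_add ha']
    field_simp
  have h₂ : ((a : ℝ) * b) ^ (-r) * ((a : ℝ) / b) ^ r = (b : ℝ) ^ (-2 * r) := by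
    rw [Real.mul_rpow ha'.le hb'.le, Real.div_rpow ha'.le hb'.le, show -2 * r = -r + -r by ring,
      Real.rpow_add hb', Real.rpow_neg ha'.le, Real.rpow_neg hb'.le]
    field_simp
  have hcost : ∀ P : Matrix (Fin b) (Fin a) ℝ,
      ((a : ℝ) * b) ^ (-r) *
          frob ((((a : ℝ) / b) ^ (-r)) • (P * La) - (((a : ℝ) / b) ^ r) • (Lb * P)) =
        frob (P * ((a : ℝ) ^ (-2 * r) • La) - ((b : ℝ) ^ (-2 * r) • Lb) * P) := fun P => by
    rw [← abs_of_pos (Real.rpow_pos_of_pos (mul_pos ha' hb') (-r)), ← frob_smul, smul_sub,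
      smul_smul, smul_smul, h₁, h₂, Matrix.mul_smul, Matrix.smul_mul]
  simp only [tsgdd, isometryDist, isometryCosts, hcost]

theorem tsgdd_triangle_general (r : ℝ) {n₁ n₂ n₃ : ℕ}
    (h1 : 0 < n₁) (h12 : n₁ ≤ n₂) (h23 : n₂ ≤ n₃)
    (L₁ : Matrix (Fin n₁) (Fin n₁) ℝ) (L₂ : Matrix (Fin n₂) (Fin n₂) ℝ)
    (L₃ : Matrix (Fin n₃) (Fin n₃) ℝ) :
    tsgdd r L₁ L₃ ≤ tsgdd r L₁ L₂ + tsgdd r L₂ L₃ := by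
  have h2 : 0 < n₂ := h1.trans_le h12
  have h3 : 0 < n₃ := h2.trans_le h23
  rw [tsgdd_eq_isometryDist r h1 h3, tsgdd_eq_isometryDist r h1 h2, tsgdd_eq_isometryDist r h2 h3]
  exact isometryDist_triangle h12 h23 _ _ _

theorem tsgdd_triangle (r : ℝ) {n₁ n₂ n₃ : ℕ}
    (h1 : 0 < n₁) (h12 : n₁ ≤ n₂) (h23 : n₂ ≤ n₃)
    (L₁ : Matrix (Fin n₁) (Fin n₁) ℝ) (L₂ : Matrix (Fin n₂) (Fin n₂) ℝ)
    (L₃ : Matrix (Fin n₃) (Fin n₃) ℝ)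
    (h₁ : L₁.IsSymm) (h₂ : L₂.IsSymm) (h₃ : L₃.IsSymm) :
    tsgdd r L₁ L₃ ≤ tsgdd r L₁ L₂ + tsgdd r L₂ L₃ :=
  tsgdd_triangle_general r h1 h12 h23 L₁ L₂ L₃
end
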